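/- Lemma 2: for any bipartite density matrix ψ^{AB}, P(X^A|BA')_{ψ_Z} ≥ P(X^A|B)_ψ, where ψ_Z = U_Z ψ U_Z† is the state after coherently copying the Z basis of A to A'. -/

import Mathlib

/-!
Given Bob's POVM `Λ` on `B`, the POVM `Γ x = ∑ y, |ỹ⟩⟨ỹ| ⊗ Λ (x + y)` on `A'B` does exactly as
well on `ψ_Z`. Conjugating by the copy isometry turns `P ⊗ Q ⊗ L` into `(P ⊙ Q) ⊗ L`, and for
Fourier projectors `|x̃⟩⟨x̃| ⊙ |ỹ⟩⟨ỹ| = d⁻¹ |(x+y)~⟩⟨(x+y)~|`. Hence the success probability of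
`Γ` on `ψ_Z` is `d⁻¹ ∑ x, ∑ y, Tr[(|(x+y)~⟩⟨(x+y)~| ⊗ Λ (x + y)) ψ]`, that of `Λ` on `ψ`.
-/

open Matrix Kronecker Complex BigOperators
open scoped ComplexOrder Classical

noncomputable section

/-- primitive d-th root of unity -/
def omg (d : ℕ) : ℂ := Complex.exp (2 * Real.pi * Complex.I / d)

/-- standard basis vector |z⟩ -/
def ketZ (d : ℕ) (z : Fin d) : Fin d → ℂ := fun i => if i = z then 1 else 0

/-- Fourier basis vector |x̃⟩ = (1/√d) Σ_z ω^{xz} |z⟩ -/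
def ketX (d : ℕ) (x : Fin d) : Fin d → ℂ :=
  fun z => ((1 / Real.sqrt d : ℝ) : ℂ) * omg d ^ ((x : ℕ) * (z : ℕ))

/-- projector |z⟩⟨z| -/
def projZ (d : ℕ) (z : Fin d) : Matrix (Fin d) (Fin d) ℂ :=
  Matrix.vecMulVec (ketZ d z) (star (ketZ d z))

/-- projector |x̃⟩⟨x̃| -/
def projX (d : ℕ) (x : Fin d) : Matrix (Fin d) (Fin d) ℂ :=
  Matrix.vecMulVec (ketX d x) (star (ketX d x))

/-- positive semidefinite square root (0 if not PSD) -/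
def msqrt {n : Type*} [Fintype n] [DecidableEq n] (M : Matrix n n ℂ) : Matrix n n ℂ :=
  if h : M.PosSemidef then (h.1.eigenvectorUnitary : Matrix n n ℂ) *
    Matrix.diagonal ((↑) ∘ Real.sqrt ∘ h.1.eigenvalues) * (star h.1.eigenvectorUnitary : Matrix n n ℂ)
    else 0

/-- trace norm ‖M‖₁ = Tr √(MᴴM) -/
def trNorm {n : Type*} [Fintype n] [DecidableEq n] (M : Matrix n n ℂ) : ℝ :=
  (msqrt (Mᴴ * M)).trace.re

/-- fidelity F(ρ,σ) = ‖√ρ√σ‖₁ -/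
def Fid {n : Type*} [Fintype n] [DecidableEq n] (ρ σ : Matrix n n ℂ) : ℝ :=
  trNorm (msqrt ρ * msqrt σ)

/-- a POVM with d outcomes -/
def IsPOVM {n : Type*} [Fintype n] [DecidableEq n] {d : ℕ} (Λ : Fin d → Matrix n n ℂ) : Prop :=
  (∀ z, (Λ z).PosSemidef) ∧ ∑ z, Λ z = 1

/-- optimal guessing probability of the measurement with rank-one elements P z on A,
given the B part of the bipartite state ψ -/
def Pguess {d : ℕ} {β : Type*} [Fintype β] [DecidableEq β]
    (P : Fin d → Matrix (Fin d) (Fin d) ℂ) (ψ : Matrix (Fin d × β) (Fin d × β) ℂ) : ℝ :=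
  sSup { r | ∃ Λ : Fin d → Matrix β β ℂ, IsPOVM Λ ∧
    r = (Matrix.trace ((∑ z, P z ⊗ₖ Λ z) * ψ)).re }

/-- the coherent copy isometry U_Z : |z⟩ ↦ |z⟩_A ⊗ |z⟩_{A'} -/
def UZmat (d : ℕ) : Matrix (Fin d × Fin d) (Fin d) ℂ :=
  fun p z => if p.1 = z ∧ p.2 = z then 1 else 0

/-- the maximally entangled vector |Φ⟩ = (1/√d) Σ_z |z⟩|z⟩ -/
def maxEnt (d : ℕ) : Fin d × Fin d → ℂ :=
  fun p => if p.1 = p.2 then ((1 / Real.sqrt d : ℝ) : ℂ) else 0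

/-- F(A|B)_ψ: the best entanglement fidelity achievable by a quantum channel
(given by its Kraus operators) acting on B alone; since Φ is pure,
F(Φ, ρ)² = ⟨Φ|ρ|Φ⟩. -/
def Fent {d : ℕ} {β : Type*} [Fintype β] [DecidableEq β]
    (ψ : Matrix (Fin d × β) (Fin d × β) ℂ) : ℝ :=
  sSup { r | ∃ (m : ℕ) (K : Fin m → Matrix (Fin d) β ℂ),
    (∑ i, (K i)ᴴ * K i = 1) ∧
    r = Real.sqrt ((star (maxEnt d) ⬝ᵥ
      ((∑ i, ((1 : Matrix (Fin d) (Fin d) ℂ) ⊗ₖ K i) * ψ *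
        ((1 : Matrix (Fin d) (Fin d) ℂ) ⊗ₖ K i)ᴴ).mulVec (maxEnt d))).re) }

/-- the state ψ_Z = U_Z ψ U_Z†, reindexed so that A is the first factor and
A' is appended to Bob's system. -/
def psiZ {d : ℕ} {β : Type*} [Fintype β] [DecidableEq β]
    (ψ : Matrix (Fin d × β) (Fin d × β) ℂ) :
    Matrix (Fin d × Fin d × β) (Fin d × Fin d × β) ℂ :=
  Matrix.submatrix
    ((UZmat d ⊗ₖ (1 : Matrix β β ℂ)) * ψ * (UZmat d ⊗ₖ (1 : Matrix β β ℂ))ᴴ)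
    (fun p => ((p.1, p.2.1), p.2.2)) (fun p => ((p.1, p.2.1), p.2.2))


open ComplexConjugate

section Kronecker
variable {α l m n p ι : Type*}

lemma Matrix.kronecker_sum [NonUnitalNonAssocSemiring α] (A : Matrix l m α)
    (B : ι → Matrix n p α) (s : Finset ι) :
    A ⊗ₖ (∑ i ∈ s, B i) = ∑ i ∈ s, A ⊗ₖ B i := by
  ext ⟨a, b⟩ ⟨c, e⟩
  simp [Matrix.sum_apply, Finset.mul_sum]

lemma Matrix.sum_kronecker [NonUnitalNonAssocSemiring α] (A : ι → Matrix l m α)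
    (B : Matrix n p α) (s : Finset ι) :
    (∑ i ∈ s, A i) ⊗ₖ B = ∑ i ∈ s, A i ⊗ₖ B := by
  ext ⟨a, b⟩ ⟨c, e⟩
  simp [Matrix.sum_apply, Finset.sum_mul]

lemma Matrix.sub_kronecker [NonUnitalNonAssocRing α] (A₁ A₂ : Matrix l m α)
    (B : Matrix n p α) :
    (A₁ - A₂) ⊗ₖ B = A₁ ⊗ₖ B - A₂ ⊗ₖ B := by
  ext ⟨a, b⟩ ⟨c, e⟩
  simp [sub_mul]

end Kronecker

section Trace
variable {𝕜 n : Type*} [RCLike 𝕜] [Fintype n] [DecidableEq n]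

lemma Matrix.PosSemidef.trace_mul_nonneg {A B : Matrix n n 𝕜} (hA : A.PosSemidef)
    (hB : B.PosSemidef) : 0 ≤ (A * B).trace := by
  open scoped MatrixOrder Matrix.Norms.L2Operator in
  obtain ⟨C, rfl⟩ := CStarAlgebra.nonneg_iff_eq_star_mul_self.mp hA.nonneg
  rw [star_eq_conjTranspose, Matrix.mul_assoc, Matrix.trace_mul_comm]
  exact (hB.mul_mul_conjTranspose_same C).trace_nonneg

lemma Matrix.PosSemidef.re_trace_mul_le {M ψ : Matrix n n 𝕜} (hM : (1 - M).PosSemidef)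
    (hψ : ψ.PosSemidef) : RCLike.re (M * ψ).trace ≤ RCLike.re ψ.trace := by
  have h := (RCLike.nonneg_iff.mp (hM.trace_mul_nonneg hψ)).1
  rwa [Matrix.sub_mul, Matrix.one_mul, Matrix.trace_sub, map_sub, sub_nonneg] at h

end Trace

lemma Fin.sum_pow_val_of_pow_eq_one {K : Type*} [Field K] {d : ℕ} {w : K} (hw : w ^ d = 1) :
    ∑ x : Fin d, w ^ (x : ℕ) = if w = 1 then (d : K) else 0 := by
  rw [Fin.sum_univ_eq_sum_range]
  split_ifs with h
  · simp [h]
  · rw [geom_sum_eq h, hw, sub_self, zero_div]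

section Fourier
variable {d : ℕ} [NeZero d]

lemma isPrimitiveRoot_omg (d : ℕ) [NeZero d] : IsPrimitiveRoot (omg d) d :=
  Complex.isPrimitiveRoot_exp d (NeZero.ne d)

lemma conj_omg_pow_mul_self (k : ℕ) : conj (omg d ^ k) * omg d ^ k = 1 := by
  rw [Complex.conj_mul', norm_pow, (isPrimitiveRoot_omg d).norm'_eq_one (NeZero.ne d)]
  simp

lemma omg_pow_mod (k : ℕ) : omg d ^ (k % d) = omg d ^ k := by
  conv_rhs => rw [← Nat.mod_add_div k d, pow_add, pow_mul, (isPrimitiveRoot_omg d).pow_eq_one,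
    one_pow, mul_one]

lemma omg_pow_mul_add (x y : Fin d) (a : ℕ) :
    omg d ^ ((x : ℕ) * a) * omg d ^ ((y : ℕ) * a) = omg d ^ (((x + y : Fin d) : ℕ) * a) := by
  rw [← pow_add, ← add_mul, ← omg_pow_mod, ← omg_pow_mod (_ * a), Fin.val_add, Nat.mod_mul_mod]

omit [NeZero d] in
lemma projX_apply (x a a' : Fin d) :
    projX d x a a' = (d : ℂ)⁻¹ * (omg d ^ ((x : ℕ) * a) * conj (omg d ^ ((x : ℕ) * a'))) := by
  have hc : ((1 / Real.sqrt d : ℝ) : ℂ) * conj ((1 / Real.sqrt d : ℝ) : ℂ) = (d : ℂ)⁻¹ := by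
    rw [Complex.conj_ofReal, ← Complex.ofReal_mul, div_mul_div_comm,
      Real.mul_self_sqrt (Nat.cast_nonneg d)]
    push_cast
    ring
  simp only [projX, ketX, vecMulVec_apply, Pi.star_apply, star_mul', Complex.star_def]
  rw [← hc]
  ring

lemma projX_hadamard_projX (x y : Fin d) :
    projX d x ⊙ projX d y = (d : ℂ)⁻¹ • projX d (x + y) := by
  ext a a'
  simp only [hadamard_apply, Matrix.smul_apply, smul_eq_mul, projX_apply, ← omg_pow_mul_add x y,
    map_mul]
  ring

lemma omg_pow_mul_conj_omg_pow_eq_one_iff (a a' : Fin d) :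
    omg d ^ (a : ℕ) * conj (omg d ^ (a' : ℕ)) = 1 ↔ a = a' := by
  constructor
  · intro h
    have : omg d ^ (a : ℕ) = omg d ^ (a' : ℕ) := by
      rw [← mul_one (omg d ^ (a : ℕ)), ← conj_omg_pow_mul_self (d := d) a', ← mul_assoc, h,
        one_mul]
    exact Fin.ext ((isPrimitiveRoot_omg d).pow_inj a.isLt a'.isLt this)
  · rintro rfl
    rw [mul_comm, conj_omg_pow_mul_self]

lemma sum_projX : ∑ x, projX d x = 1 := by
  ext a a'
  set w := omg d ^ (a : ℕ) * conj (omg d ^ (a' : ℕ))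
  have hw : w ^ d = 1 := by
    rw [mul_pow, ← pow_mul, ← map_pow, ← pow_mul, mul_comm (a : ℕ), mul_comm (a' : ℕ), pow_mul,
      pow_mul, (isPrimitiveRoot_omg d).pow_eq_one, one_pow, one_pow, map_one, one_mul]
  have hterm : ∀ x : Fin d, projX d x a a' = (d : ℂ)⁻¹ * w ^ (x : ℕ) := fun x => by
    rw [projX_apply, mul_pow, ← pow_mul, ← map_pow, ← pow_mul, mul_comm (a : ℕ),
      mul_comm (a' : ℕ)]
  have hw1 : w = 1 ↔ a = a' := omg_pow_mul_conj_omg_pow_eq_one_iff a a'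
  simp only [Matrix.sum_apply, hterm, ← Finset.mul_sum, Fin.sum_pow_val_of_pow_eq_one hw,
    hw1, Matrix.one_apply]
  split_ifs
  · exact inv_mul_cancel₀ (Nat.cast_ne_zero.mpr (NeZero.ne d))
  · exact mul_zero _

lemma isPOVM_projX : IsPOVM (projX d) :=
  ⟨fun _ => posSemidef_vecMulVec_self_star _, sum_projX⟩

end Fourier

section POVM
variable {d : ℕ} {n m : Type*} [Fintype n] [DecidableEq n] [Fintype m] [DecidableEq m]

lemma exists_isPOVM [NeZero d] : ∃ Λ : Fin d → Matrix n n ℂ, IsPOVM Λ := by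
  refine ⟨Pi.single 0 1, fun z => ?_, by simp⟩
  rcases eq_or_ne z 0 with rfl | hz
  · simpa using PosSemidef.one
  · simpa [hz] using PosSemidef.zero

lemma IsPOVM.one_sub_posSemidef {P : Fin d → Matrix n n ℂ} (hP : IsPOVM P) (z : Fin d) :
    (1 - P z).PosSemidef := by
  rw [← hP.2, ← Finset.add_sum_erase _ _ (Finset.mem_univ z), add_sub_cancel_left]
  exact posSemidef_sum _ fun x _ => hP.1 x

lemma IsPOVM.one_sub_sum_kronecker_posSemidef {P : Fin d → Matrix n n ℂ}
    {Γ : Fin d → Matrix m m ℂ} (hP : IsPOVM P) (hΓ : IsPOVM Γ) :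
    (1 - ∑ z, P z ⊗ₖ Γ z).PosSemidef := by
  have h : 1 - ∑ z, P z ⊗ₖ Γ z = ∑ z, (1 - P z) ⊗ₖ Γ z := by
    simp only [sub_kronecker, Finset.sum_sub_distrib, ← kronecker_sum, hΓ.2, one_kronecker_one]
  rw [h]
  exact posSemidef_sum _ fun z _ => (hP.one_sub_posSemidef z).kronecker (hΓ.1 z)

lemma IsPOVM.kronecker_sum_shift [NeZero d] {P : Fin d → Matrix n n ℂ}
    {Λ : Fin d → Matrix m m ℂ} (hP : IsPOVM P) (hΛ : IsPOVM Λ) : IsPOVM fun x => ∑ y, P y ⊗ₖ Λ (x + y) := by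
  refine ⟨fun x => posSemidef_sum _ fun y _ => (hP.1 y).kronecker (hΛ.1 _), ?_⟩
  have hshift : ∀ y, ∑ x, Λ (x + y) = 1 := fun y =>
    (Equiv.sum_comp (Equiv.addRight y) Λ).trans hΛ.2
  rw [Finset.sum_comm]
  simp only [← kronecker_sum, hshift, ← sum_kronecker, hP.2, one_kronecker_one]

end POVM

section Pguess
variable {d : ℕ} {β : Type*} [Fintype β] [DecidableEq β]
  {P : Fin d → Matrix (Fin d) (Fin d) ℂ} {ψ : Matrix (Fin d × β) (Fin d × β) ℂ}

lemma le_Pguess (hP : IsPOVM P) (hψ : ψ.PosSemidef) {Λ : Fin d → Matrix β β ℂ}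
    (hΛ : IsPOVM Λ) : ((∑ z, P z ⊗ₖ Λ z) * ψ).trace.re ≤ Pguess P ψ := by
  refine le_csSup ⟨ψ.trace.re, ?_⟩ ⟨Λ, hΛ, rfl⟩
  rintro _ ⟨Γ, hΓ, rfl⟩
  exact (hP.one_sub_sum_kronecker_posSemidef hΓ).re_trace_mul_le hψ

lemma Pguess_le [NeZero d] {c : ℝ}
    (h : ∀ Λ : Fin d → Matrix β β ℂ, IsPOVM Λ → ((∑ z, P z ⊗ₖ Λ z) * ψ).trace.re ≤ c) :
    Pguess P ψ ≤ c := by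
  obtain ⟨Λ₀, hΛ₀⟩ := exists_isPOVM (d := d) (n := β)
  refine csSup_le ⟨_, Λ₀, hΛ₀, rfl⟩ ?_
  rintro _ ⟨Λ, hΛ, rfl⟩
  exact h Λ hΛ

end Pguess

section Copy
variable {d : ℕ} {β : Type*} [DecidableEq β]

def copyIso (d : ℕ) (β : Type*) [DecidableEq β] : Matrix (Fin d × Fin d × β) (Fin d × β) ℂ :=
  (UZmat d ⊗ₖ (1 : Matrix β β ℂ)).submatrix (fun p => ((p.1, p.2.1), p.2.2)) id

lemma copyIso_apply (r : Fin d × Fin d × β) (z : Fin d) (b : β) :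
    copyIso d β r (z, b) = if r = (z, z, b) then 1 else 0 := by
  obtain ⟨a, c, e⟩ := r
  by_cases e = b <;> simp [copyIso, UZmat, Prod.ext_iff, ite_and, *]

variable [Fintype β]

lemma psiZ_eq (ψ : Matrix (Fin d × β) (Fin d × β) ℂ) :
    psiZ ψ = copyIso d β * ψ * (copyIso d β)ᴴ := rfl

lemma conjTranspose_copyIso_mul_kronecker_mul_copyIso (P Q : Matrix (Fin d) (Fin d) ℂ)
    (L : Matrix β β ℂ) :
    (copyIso d β)ᴴ * (P ⊗ₖ (Q ⊗ₖ L)) * copyIso d β = (P ⊙ Q) ⊗ₖ L := by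
  ext ⟨z, b⟩ ⟨z', b'⟩
  simp [Matrix.mul_apply, copyIso_apply, mul_assoc]

lemma psiZ_posSemidef {ψ : Matrix (Fin d × β) (Fin d × β) ℂ} (hψ : ψ.PosSemidef) :
    (psiZ ψ).PosSemidef :=
  psiZ_eq ψ ▸ hψ.mul_mul_conjTranspose_same _

lemma trace_kronecker_mul_psiZ (P Q : Matrix (Fin d) (Fin d) ℂ) (L : Matrix β β ℂ)
    (ψ : Matrix (Fin d × β) (Fin d × β) ℂ) :
    ((P ⊗ₖ (Q ⊗ₖ L)) * psiZ ψ).trace = (((P ⊙ Q) ⊗ₖ L) * ψ).trace := by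
  rw [psiZ_eq, ← Matrix.mul_assoc, Matrix.trace_mul_cycle, ← Matrix.mul_assoc,
    conjTranspose_copyIso_mul_kronecker_mul_copyIso]

lemma trace_sum_projX_kronecker_shift_mul_psiZ [NeZero d] (Λ : Fin d → Matrix β β ℂ)
    (ψ : Matrix (Fin d × β) (Fin d × β) ℂ) :
    ((∑ x, projX d x ⊗ₖ ∑ y, projX d y ⊗ₖ Λ (x + y)) * psiZ ψ).trace
      = ((∑ z, projX d z ⊗ₖ Λ z) * ψ).trace := by
  set g : Fin d → ℂ := fun z => ((projX d z ⊗ₖ Λ z) * ψ).trace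
  have hshift : ∀ x, ∑ y, g (x + y) = ∑ z, g z := fun x => Equiv.sum_comp (Equiv.addLeft x) g
  simp only [kronecker_sum, Finset.sum_mul, trace_sum, trace_kronecker_mul_psiZ,
    projX_hadamard_projX, smul_kronecker, smul_mul, trace_smul, smul_eq_mul, ← Finset.mul_sum]
  change (d : ℂ)⁻¹ * ∑ x, ∑ y, g (x + y) = ∑ z, g z
  rw [Finset.sum_congr rfl fun x _ => hshift x, Finset.sum_const, Finset.card_univ,
    Fintype.card_fin, nsmul_eq_mul, inv_mul_cancel_left₀ (Nat.cast_ne_zero.mpr (NeZero.ne d))]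

end Copy

theorem pguessX_psiZ_ge_general {d : ℕ} [NeZero d] {β : Type*} [Fintype β] [DecidableEq β]
    (ψ : Matrix (Fin d × β) (Fin d × β) ℂ) (hψ : ψ.PosSemidef) :
    Pguess (projX d) (psiZ ψ) ≥ Pguess (projX d) ψ := by
  refine Pguess_le fun Λ hΛ => ?_
  rw [← trace_sum_projX_kronecker_shift_mul_psiZ]
  exact le_Pguess isPOVM_projX (psiZ_posSemidef hψ) (isPOVM_projX.kronecker_sum_shift hΛ)

/-- Lemma 2: P(X^A|BA')_{ψ_Z} ≥ P(X^A|B)_ψ. -/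
theorem pguessX_psiZ_ge {d : ℕ} [NeZero d] {β : Type*} [Fintype β] [DecidableEq β]
    (ψ : Matrix (Fin d × β) (Fin d × β) ℂ) (hψ : ψ.PosSemidef) (hψ1 : ψ.trace = 1) :
    Pguess (projX d) (psiZ ψ) ≥ Pguess (projX d) ψ :=
  pguessX_psiZ_ge_general ψ hψ
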